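/- For every odd integer n ≥ 1, there exists a bijection between the set of derangements of {1,2,…,n} and the set of permutations of {1,2,…,n} with exactly one fixed point other than the permutation (1)(2,3)(4,5)⋯(n-1,n). -/
import Mathlib


/-- The function on `Fin n` fixing `0`, sending each odd value `2k-1` to `2k`
(when `2k < n`) and each even value `2k ≥ 2` to `2k-1`.  In 1-indexed notation,
for `n` odd, this is the permutation `(1)(2,3)(4,5)⋯(n-1,n)`, which fixes `1` and
swaps `2k ↔ 2k+1` for `1 ≤ k ≤ (n-1)/2`. -/
def fixOnePairSwapFun (n : ℕ) : Fin n → Fin n := fun i =>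
  if i.val % 2 = 1 then
    if h : i.val + 1 < n then ⟨i.val + 1, h⟩ else i
  else if i.val = 0 then i else ⟨i.val - 1, lt_of_le_of_lt (Nat.sub_le _ _) i.isLt⟩

lemma fixOnePairSwapFun_involutive (n : ℕ) : Function.Involutive (fixOnePairSwapFun n) := by
  intro i
  unfold fixOnePairSwapFun
  split_ifs <;>
    first
      | rfl
      | (apply Fin.ext; simp_all <;> omega)

/-- The permutation `(1)(2,3)(4,5)⋯(n-1,n)` (for `n` odd) of `Fin n`. -/
def fixOnePairSwapPerm (n : ℕ) : Equiv.Perm (Fin n) :=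
  (fixOnePairSwapFun_involutive n).toPerm

open Equiv Function

noncomputable section

def singletonFixedEquiv {α : Type*} [Fintype α] [DecidableEq α] (a : α) :
    {f : Perm α // Function.fixedPoints f = {a}} ≃ derangements ({a}ᶜ : Set α) :=
  (subtypeEquivRight (p := fun f : Perm α => Function.fixedPoints f = {a})
    (q := fun f : Perm α => ∀ b, ¬(b ∈ ({a}ᶜ : Set α)) ↔ b ∈ Function.fixedPoints f)
    (fun x => by
      simp only [Set.mem_compl_iff, not_not, Set.ext_iff, Set.mem_singleton_iff]
      exact ⟨fun h b => (h b).symm, fun h b => (h b).symm⟩)).trans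
    (derangements.subtypeEquiv (· ∈ ({a}ᶜ : Set α))).symm

noncomputable def uniqueFixedSigmaEquiv {α : Type*} [Fintype α] [DecidableEq α] :
    {π : Perm α // ∃! i : α, π i = i} ≃ Σ a : α, {π : Perm α // Function.fixedPoints π = {a}} where
  toFun b := ⟨b.2.choose, b.1, by
    obtain ⟨h1, h2⟩ := b.2.choose_spec
    exact Set.eq_singleton_iff_unique_mem.mpr ⟨h1, fun x hx => h2 x hx⟩⟩
  invFun s := ⟨s.2.1, ⟨s.1, by
    have h := s.2.2
    constructor
    · show s.1 ∈ Function.fixedPoints (s.2.1 : Perm α)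
      rw [h]; rfl
    · intro j hj
      have hj' : j ∈ Function.fixedPoints (s.2.1 : Perm α) := hj
      rw [h] at hj'; exact hj'⟩⟩
  left_inv b := Subtype.ext rfl
  right_inv s := by
    refine Sigma.subtype_ext ?_ rfl
    have h := s.2.2
    have hmem : _ ∈ Function.fixedPoints (s.2.1 : Perm α) :=
      (Exists.choose_spec (⟨s.1, by
        show s.1 ∈ Function.fixedPoints (s.2.1 : Perm α)
        rw [h]; rfl,
        fun j hj => by
          have hj' : j ∈ Function.fixedPoints (s.2.1 : Perm α) := hj
          rw [h] at hj'; exact hj'⟩ : ∃! i, (s.2.1 : Perm α) i = i)).1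
    exact (Set.eq_singleton_iff_unique_mem.mp h).2 _ hmem

end

/-- For every odd integer `n ≥ 1`, there is a bijection between the set of derangements of
`Fin n` and the set of permutations of `Fin n` with exactly one fixed point other than the
permutation `(1)(2,3)(4,5)⋯(n-1,n)`. -/
theorem derangements_equiv_one_fixed_point_minus (n : ℕ) (hn : 1 ≤ n) (hno : Odd n) :
    Nonempty
      ({π : Equiv.Perm (Fin n) // ∀ i : Fin n, π i ≠ i} ≃
        {π : Equiv.Perm (Fin n) //
          (∃! i : Fin n, π i = i) ∧ π ≠ fixOnePairSwapPerm n}) := by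
  classical
  have hmod : n % 2 = 1 := Nat.odd_iff.mp hno
  have hp : ∀ i : Fin n, fixOnePairSwapPerm n i = fixOnePairSwapFun n i := fun i => rfl
  -- the special permutation has a unique fixed point, namely 0
  have hfix : ∃! i : Fin n, fixOnePairSwapPerm n i = i := by
    refine ⟨⟨0, hn⟩, ?_, ?_⟩
    · show fixOnePairSwapPerm n ⟨0, hn⟩ = ⟨0, hn⟩
      rw [hp]; unfold fixOnePairSwapFun; simp
    · intro j hj
      rw [hp] at hj
      unfold fixOnePairSwapFun at hj
      apply Fin.ext
      have h0 : ((⟨0, hn⟩ : Fin n) : ℕ) = 0 := rfl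
      have hjlt := j.isLt
      split_ifs at hj with h1 h2 h3
      · have := congrArg Fin.val hj; simp at this
      · omega
      · omega
      · have := congrArg Fin.val hj; simp at this; omega
  -- cardinalities
  have c1 : Fintype.card {π : Equiv.Perm (Fin n) // ∀ i : Fin n, π i ≠ i}
      = numDerangements n := by
    rw [← card_derangements_fin_eq_numDerangements (n := n)]
    exact Fintype.card_congr (subtypeEquivRight fun f => Iff.rfl)
  have c2 : Fintype.card {π : Equiv.Perm (Fin n) // ∃! i : Fin n, π i = i}
      = n * numDerangements (n - 1) := by
    rw [Fintype.card_congr (uniqueFixedSigmaEquiv (α := Fin n)), Fintype.card_sigma]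
    have : ∀ a : Fin n,
        Fintype.card {π : Equiv.Perm (Fin n) // Function.fixedPoints π = {a}}
          = numDerangements (n - 1) := by
      intro a
      rw [Fintype.card_congr (singletonFixedEquiv a),
        card_derangements_eq_numDerangements]
      congr 1
      rw [Fintype.card_compl_set, Set.card_singleton, Fintype.card_fin]
    simp only [this, Finset.sum_const, Finset.card_univ, Fintype.card_fin, smul_eq_mul]
  have c3 : Fintype.card {π : Equiv.Perm (Fin n) //
        (∃! i : Fin n, π i = i) ∧ π ≠ fixOnePairSwapPerm n}
      = n * numDerangements (n - 1) - 1 := by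
    have e1 : {π : Equiv.Perm (Fin n) //
          (∃! i : Fin n, π i = i) ∧ π ≠ fixOnePairSwapPerm n}
        ≃ {x : {π : Equiv.Perm (Fin n) // ∃! i : Fin n, π i = i} //
            ¬(x = ⟨fixOnePairSwapPerm n, hfix⟩)} := by
      refine (subtypeSubtypeEquivSubtypeInter
        (fun π : Equiv.Perm (Fin n) => ∃! i : Fin n, π i = i)
        (fun π => π ≠ fixOnePairSwapPerm n)).symm.symm.symm.trans ?_
      · exact subtypeEquivRight fun x => by
          simp [Subtype.ext_iff]
    rw [Fintype.card_congr e1, Fintype.card_subtype_compl, Fintype.card_subtype_eq, c2]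
  -- the numerical identity
  have key : n * numDerangements (n - 1) = numDerangements n + 1 := by
    obtain ⟨m, rfl⟩ : ∃ m, n = m + 1 := ⟨n - 1, by omega⟩
    have hs := numDerangements_succ m
    have hm : m % 2 = 0 := by omega
    have hpow : (-1 : ℤ) ^ m = 1 := by
      rw [← Nat.div_add_mod m 2, hm]
      simp [pow_mul]
    rw [hpow] at hs
    have hs' : ((m + 1) * numDerangements m : ℤ) = numDerangements (m + 1) + 1 := by
      rw [hs]; ring
    simp only [Nat.add_sub_cancel]
    exact_mod_cast hs'
  rw [← Fintype.card_eq, c1, c3, key]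
  omega
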